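/- arXiv:2602.06840 — 4 statements merged into one kernel-verified Lean document; each statement's English description precedes it below -/
import Mathlib

section
/- Let θ_i, θ_r ∈ [0, π/2) with θ_i ≠ θ_r, k > 0, η0 > 0, and set Ψ(y) = exp(−i k(sin θ_r − sin θ_i) y) and Z2(y) = η0(1 + Ψ(y))/(cos θ_i − Ψ(y) cos θ_r). Then for every y ∈ ℝ: (i) cos θ_i − Ψ(y) cos θ_r ≠ 0, so Z2(y) is well defined; and (ii) the fields E(y) = A0 exp(−i k sin θ_i · y)(1 + Ψ(y)) and H(y) = (A0/η0) exp(−i k sin θ_i · y)(−cos θ_i + cos θ_r Ψ(y)) satisfy the impedance boundary condition E(y) = −Z2(y)·H(y), for any A0 ∈ ℂ. That is, the geometric-optics impedance exactly supports anomalous reflection of the incident plane wave into a single reflected plane wave of unit amplitude towards θ_r. -/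
open Real

/-!
Since `|Ψ(y)| = 1`, the denominator `cos θi − Ψ(y) cos θr` can only vanish if
`cos θi = cos θr`, which is excluded because `cos` is injective on `[0, π/2]`.
The magnetic field is `H = −(A0/η0) e^{−ik sin θi y} (cos θi − Ψ cos θr)`, a multiple of
exactly that denominator, so `−Z2 H = A0 e^{−ik sin θi y} (1 + Ψ) = E` after cancelling it.
-/

lemma Complex.norm_exp_neg_I_mul_ofReal (x : ℝ) : ‖Complex.exp (-Complex.I * x)‖ = 1 := by
  rw [show -Complex.I * x = ((-x : ℝ) : ℂ) * Complex.I by push_cast; ring]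
  exact Complex.norm_exp_ofReal_mul_I _

lemma Complex.ofReal_sub_mul_ofReal_ne_zero {a b : ℝ} {u : ℂ} (hu : ‖u‖ = 1) (hab : |a| ≠ |b|) :
    (a : ℂ) - u * b ≠ 0 := by
  intro h
  apply hab
  have hnorm := congrArg (‖·‖) (sub_eq_zero.mp h)
  simpa only [norm_mul, hu, one_mul, Complex.norm_real, Real.norm_eq_abs] using hnorm

lemma Real.abs_cos_ne_abs_cos {θ φ : ℝ} (hθ : θ ∈ Set.Icc 0 (π / 2)) (hφ : φ ∈ Set.Icc 0 (π / 2))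
    (hne : θ ≠ φ) : |cos θ| ≠ |cos φ| := by
  have hIcc : Set.Icc 0 (π / 2) ⊆ Set.Icc 0 π := Set.Icc_subset_Icc_right (by linarith [pi_pos])
  rw [abs_of_nonneg (cos_nonneg_of_mem_Icc ⟨by linarith [hθ.1, pi_pos], hθ.2⟩),
    abs_of_nonneg (cos_nonneg_of_mem_Icc ⟨by linarith [hφ.1, pi_pos], hφ.2⟩)]
  exact fun h => hne (injOn_cos (hIcc hθ) (hIcc hφ) h)

lemma impedance_boundary_condition {K : Type*} [Field K] {η A e Ψ ci cr : K} (hη : η ≠ 0)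
    (hD : ci - Ψ * cr ≠ 0) :
    A * e * (1 + Ψ) = -(η * (1 + Ψ) / (ci - Ψ * cr)) * (A / η * e * (-ci + cr * Ψ)) := by
  field_simp
  ring

theorem stmt_14_general (θi θr k η0 : ℝ)
    (hθi : θi ∈ Set.Ico 0 (π / 2)) (hθr : θr ∈ Set.Ico 0 (π / 2))
    (hne : θi ≠ θr) (hη0 : 0 < η0)
    (Ψ : ℝ → ℂ)
    (hΨ : ∀ y : ℝ, Ψ y = Complex.exp (-Complex.I * ((k * (Real.sin θr - Real.sin θi) * y : ℝ) : ℂ)))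
    (Z2 : ℝ → ℂ)
    (hZ2 : ∀ y : ℝ, Z2 y = (η0 : ℂ) * (1 + Ψ y) /
      (((Real.cos θi : ℝ) : ℂ) - Ψ y * ((Real.cos θr : ℝ) : ℂ))) :
    ∀ y : ℝ,
      (((Real.cos θi : ℝ) : ℂ) - Ψ y * ((Real.cos θr : ℝ) : ℂ) ≠ 0) ∧
      (∀ A0 : ℂ,
        A0 * Complex.exp (-Complex.I * ((k * Real.sin θi * y : ℝ) : ℂ)) * (1 + Ψ y)
          = -Z2 y * ((A0 / (η0 : ℂ)) * Complex.exp (-Complex.I * ((k * Real.sin θi * y : ℝ) : ℂ)) *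
            (-((Real.cos θi : ℝ) : ℂ) + ((Real.cos θr : ℝ) : ℂ) * Ψ y))) := by
  intro y
  have hD : ((Real.cos θi : ℝ) : ℂ) - Ψ y * ((Real.cos θr : ℝ) : ℂ) ≠ 0 :=
    Complex.ofReal_sub_mul_ofReal_ne_zero (hΨ y ▸ Complex.norm_exp_neg_I_mul_ofReal _)
      (abs_cos_ne_abs_cos (Set.Ico_subset_Icc_self hθi) (Set.Ico_subset_Icc_self hθr) hne)
  refine ⟨hD, fun A0 => ?_⟩
  rw [hZ2 y]
  exact impedance_boundary_condition (Complex.ofReal_ne_zero.mpr hη0.ne') hD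

/-- The geometric-optics impedance Z2 is well defined and exactly
supports anomalous reflection of the incident plane wave into a single
reflected plane wave of unit amplitude towards θ_r. -/
theorem stmt_14 (θi θr k η0 : ℝ)
    (hθi : θi ∈ Set.Ico 0 (π / 2)) (hθr : θr ∈ Set.Ico 0 (π / 2))
    (hne : θi ≠ θr) (hk : 0 < k) (hη0 : 0 < η0)
    (Ψ : ℝ → ℂ)
    (hΨ : ∀ y : ℝ, Ψ y = Complex.exp (-Complex.I * ((k * (Real.sin θr - Real.sin θi) * y : ℝ) : ℂ)))
    (Z2 : ℝ → ℂ)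
    (hZ2 : ∀ y : ℝ, Z2 y = (η0 : ℂ) * (1 + Ψ y) /
      (((Real.cos θi : ℝ) : ℂ) - Ψ y * ((Real.cos θr : ℝ) : ℂ))) :
    ∀ y : ℝ,
      (((Real.cos θi : ℝ) : ℂ) - Ψ y * ((Real.cos θr : ℝ) : ℂ) ≠ 0) ∧
      (∀ A0 : ℂ,
        A0 * Complex.exp (-Complex.I * ((k * Real.sin θi * y : ℝ) : ℂ)) * (1 + Ψ y)
          = -Z2 y * ((A0 / (η0 : ℂ)) * Complex.exp (-Complex.I * ((k * Real.sin θi * y : ℝ) : ℂ)) *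
            (-((Real.cos θi : ℝ) : ℂ) + ((Real.cos θr : ℝ) : ℂ) * Ψ y))) :=
  stmt_14_general θi θr k η0 hθi hθr hne hη0 Ψ hΨ Z2 hZ2
end

section
/- Let θ_i, θ_r ∈ [0, π/2) with θ_i ≠ θ_r, k > 0, η0 > 0, and set Ψ(y) = exp(−i k(sin θ_r − sin θ_i) y) and Z2(y) = η0(1 + Ψ(y))/(cos θ_i − Ψ(y) cos θ_r). Then for every y ∈ ℝ, Re(Z2(y)) = η0(cos θ_i − cos θ_r)(1 + cos(k(sin θ_r − sin θ_i) y)) / |cos θ_i − Ψ(y) cos θ_r|². In particular, if θ_i < θ_r then Re(Z2(y)) ≥ 0 for all y, i.e., the GO impedance profile is lossy (introduces power losses). -/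
open Real

namespace Complex

/-- Multiplying by `conj (a - b z)` makes the numerator's real part
`a - b + (a - b) Re z`, because `z conj z = 1`. -/
theorem re_one_add_div_sub_mul_ofReal {z : ℂ} (hz : ‖z‖ = 1) (a b : ℝ) :
    ((1 + z) / ((a : ℂ) - z * b)).re = (a - b) * (1 + z.re) / ‖(a : ℂ) - z * b‖ ^ 2 := by
  have hz_normSq : z.re * z.re + z.im * z.im = 1 := by
    rw [← normSq_apply, ← Complex.sq_norm, hz, one_pow]
  rw [div_re, ← add_div, Complex.sq_norm]
  congr 1
  simp only [add_re, one_re, sub_re, ofReal_re, mul_re, ofReal_im, add_im, one_im, sub_im,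
    mul_im]
  linear_combination (-b) * hz_normSq

theorem norm_exp_neg_I_mul_ofReal_s15 (t : ℝ) : ‖exp (-I * t)‖ = 1 := by
  simp [norm_exp]

theorem re_exp_neg_I_mul_ofReal (t : ℝ) : (exp (-I * t)).re = Real.cos t := by
  simp [exp_re]

end Complex

theorem stmt_15_general (θi θr k η0 : ℝ)
    (hθi : θi ∈ Set.Ico 0 (π / 2)) (hθr : θr ∈ Set.Ico 0 (π / 2))
    (hη0 : 0 < η0)
    (Ψ : ℝ → ℂ)
    (hΨ : ∀ y : ℝ, Ψ y = Complex.exp (-Complex.I * ((k * (Real.sin θr - Real.sin θi) * y : ℝ) : ℂ)))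
    (Z2 : ℝ → ℂ)
    (hZ2 : ∀ y : ℝ, Z2 y = (η0 : ℂ) * (1 + Ψ y) /
      (((Real.cos θi : ℝ) : ℂ) - Ψ y * ((Real.cos θr : ℝ) : ℂ))) :
    (∀ y : ℝ, (Z2 y).re =
      η0 * (Real.cos θi - Real.cos θr) * (1 + Real.cos (k * (Real.sin θr - Real.sin θi) * y)) /
        (‖((Real.cos θi : ℝ) : ℂ) - Ψ y * ((Real.cos θr : ℝ) : ℂ)‖) ^ 2) ∧
    (θi < θr → ∀ y : ℝ, 0 ≤ (Z2 y).re) := by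
  have hre : ∀ y : ℝ, (Z2 y).re =
      η0 * (Real.cos θi - Real.cos θr) * (1 + Real.cos (k * (Real.sin θr - Real.sin θi) * y)) /
        (‖((Real.cos θi : ℝ) : ℂ) - Ψ y * ((Real.cos θr : ℝ) : ℂ)‖) ^ 2 := by
    intro y
    have hΨ_norm : ‖Ψ y‖ = 1 := by rw [hΨ]; exact Complex.norm_exp_neg_I_mul_ofReal_s15 _
    rw [hZ2, mul_div_assoc, Complex.re_ofReal_mul,
      Complex.re_one_add_div_sub_mul_ofReal hΨ_norm, hΨ, Complex.re_exp_neg_I_mul_ofReal]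
    ring
  refine ⟨hre, fun hlt y => ?_⟩
  have hcos : Real.cos θr < Real.cos θi :=
    Real.cos_lt_cos_of_nonneg_of_le_pi hθi.1 (by linarith [hθr.2, Real.pi_pos]) hlt
  rw [hre]
  have hcos_y := Real.neg_one_le_cos (k * (Real.sin θr - Real.sin θi) * y)
  exact div_nonneg
    (mul_nonneg (mul_nonneg hη0.le (sub_nonneg.2 hcos.le)) (by linarith)) (sq_nonneg _)

/-- Real part of the GO impedance Z2, and its nonnegativity
(lossiness) when θ_i < θ_r. -/
theorem stmt_15 (θi θr k η0 : ℝ)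
    (hθi : θi ∈ Set.Ico 0 (π / 2)) (hθr : θr ∈ Set.Ico 0 (π / 2))
    (hne : θi ≠ θr) (hk : 0 < k) (hη0 : 0 < η0)
    (Ψ : ℝ → ℂ)
    (hΨ : ∀ y : ℝ, Ψ y = Complex.exp (-Complex.I * ((k * (Real.sin θr - Real.sin θi) * y : ℝ) : ℂ)))
    (Z2 : ℝ → ℂ)
    (hZ2 : ∀ y : ℝ, Z2 y = (η0 : ℂ) * (1 + Ψ y) /
      (((Real.cos θi : ℝ) : ℂ) - Ψ y * ((Real.cos θr : ℝ) : ℂ))) :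
    (∀ y : ℝ, (Z2 y).re =
      η0 * (Real.cos θi - Real.cos θr) * (1 + Real.cos (k * (Real.sin θr - Real.sin θi) * y)) /
        (‖((Real.cos θi : ℝ) : ℂ) - Ψ y * ((Real.cos θr : ℝ) : ℂ)‖) ^ 2) ∧
    (θi < θr → ∀ y : ℝ, 0 ≤ (Z2 y).re) :=
  stmt_15_general θi θr k η0 hθi hθr hη0 Ψ hΨ Z2 hZ2
end

section
/- Let θ_i, θ_r ∈ [0, π/2) with θ_i ≠ θ_r, k > 0, η0 > 0, set φ(y) = k(sin θ_r − sin θ_i) y, Ψ(y) = exp(−i φ(y)), and Z3(y) = (η0/√(cos θ_i cos θ_r))·(√(cos θ_r) + √(cos θ_i) Ψ(y))/(√(cos θ_i) − √(cos θ_r) Ψ(y)). Then for every y ∈ ℝ, |√(cos θ_i) − √(cos θ_r) Ψ(y)|² = cos θ_i + cos θ_r − 2√(cos θ_i cos θ_r) cos φ(y) > 0 and Re(Z3(y)) = η0(cos θ_i − cos θ_r) cos φ(y) / (√(cos θ_i cos θ_r)·(cos θ_i + cos θ_r − 2√(cos θ_i cos θ_r) cos φ(y))). -/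
/-!
With `a = √(cos θi)`, `b = √(cos θr)` and `w = e^{-iφ}` on the unit circle,
`|a - b w|² = a² + b² - 2ab cos φ ≥ (a - b)²`, which is positive because `cos` is injective on
`[0, π/2)`; and the real part of `(b + a w) / (a - b w)` is `(a² - b²) cos φ / |a - b w|²`.
-/

open Real

namespace Complex

theorem exp_neg_I_mul_ofReal (t : ℝ) : exp (-I * t) = Real.cos t - Real.sin t * I := by
  rw [show -I * t = ((-t : ℝ) : ℂ) * I by push_cast; ring, exp_mul_I, ← ofReal_cos, ← ofReal_sin,
    Real.cos_neg, Real.sin_neg, ofReal_neg, neg_mul, ← sub_eq_add_neg]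

theorem normSq_ofReal_sub_ofReal_mul_exp (a b t : ℝ) :
    normSq (a - b * exp (-I * t)) = a ^ 2 + b ^ 2 - 2 * (a * b) * Real.cos t := by
  rw [exp_neg_I_mul_ofReal, normSq_apply]
  simp only [sub_re, sub_im, mul_re, mul_im, ofReal_re, ofReal_im, I_re, I_im]
  linear_combination b ^ 2 * Real.sin_sq_add_cos_sq t

/-- The cross terms `a b (1 - |w|²)` of `(b + a w) (a - b w̄)` cancel since `|w| = 1`. Where the
denominator vanishes both sides are `0` by the convention `x / 0 = 0`. -/
theorem re_div_ofReal_sub_ofReal_mul_exp (a b t : ℝ) :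
    ((b + a * exp (-I * t)) / (a - b * exp (-I * t))).re
      = (a ^ 2 - b ^ 2) * Real.cos t / (a ^ 2 + b ^ 2 - 2 * (a * b) * Real.cos t) := by
  rw [div_re, normSq_ofReal_sub_ofReal_mul_exp, ← add_div, exp_neg_I_mul_ofReal]
  congr 1
  simp only [add_re, add_im, sub_re, sub_im, mul_re, mul_im, ofReal_re, ofReal_im, I_re, I_im]
  linear_combination (-(a * b)) * Real.sin_sq_add_cos_sq t

end Complex

theorem sq_add_sq_sub_two_mul_mul_cos_pos {a b : ℝ} (hab : 0 ≤ a * b) (hne : a ≠ b) (t : ℝ) :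
    0 < a ^ 2 + b ^ 2 - 2 * (a * b) * Real.cos t := by
  have : 0 < (a - b) ^ 2 := by positivity [sub_ne_zero.mpr hne]
  nlinarith [Real.cos_le_one t]

theorem stmt_17_general (θi θr η0 : ℝ)
    (hθi : θi ∈ Set.Ico 0 (π / 2)) (hθr : θr ∈ Set.Ico 0 (π / 2))
    (hne : θi ≠ θr)
    (φ : ℝ → ℝ)
    (Ψ : ℝ → ℂ) (hΨ : ∀ y : ℝ, Ψ y = Complex.exp (-Complex.I * ((φ y : ℝ) : ℂ)))
    (Z3 : ℝ → ℂ)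
    (hZ3 : ∀ y : ℝ, Z3 y =
      ((η0 / Real.sqrt (Real.cos θi * Real.cos θr) : ℝ) : ℂ) *
        (((Real.sqrt (Real.cos θr) : ℝ) : ℂ) + ((Real.sqrt (Real.cos θi) : ℝ) : ℂ) * Ψ y) /
        (((Real.sqrt (Real.cos θi) : ℝ) : ℂ) - ((Real.sqrt (Real.cos θr) : ℝ) : ℂ) * Ψ y)) :
    ∀ y : ℝ,
      ((‖(((Real.sqrt (Real.cos θi) : ℝ) : ℂ)
            - ((Real.sqrt (Real.cos θr) : ℝ) : ℂ) * Ψ y)‖) ^ 2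
          = Real.cos θi + Real.cos θr
            - 2 * Real.sqrt (Real.cos θi * Real.cos θr) * Real.cos (φ y)) ∧
      (0 < Real.cos θi + Real.cos θr
            - 2 * Real.sqrt (Real.cos θi * Real.cos θr) * Real.cos (φ y)) ∧
      ((Z3 y).re = η0 * (Real.cos θi - Real.cos θr) * Real.cos (φ y) /
        (Real.sqrt (Real.cos θi * Real.cos θr) *
          (Real.cos θi + Real.cos θr
            - 2 * Real.sqrt (Real.cos θi * Real.cos θr) * Real.cos (φ y)))) := by
  intro y
  have hIcc : ∀ θ ∈ Set.Ico 0 (π / 2), θ ∈ Set.Icc 0 π := fun θ hθ =>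
    ⟨hθ.1, by linarith [hθ.2, pi_pos]⟩
  have hci : 0 < cos θi := cos_pos_of_mem_Ioo ⟨by linarith [hθi.1, pi_pos], hθi.2⟩
  have hcr : 0 < cos θr := cos_pos_of_mem_Ioo ⟨by linarith [hθr.1, pi_pos], hθr.2⟩
  have hsqrt_ne : √(cos θi) ≠ √(cos θr) := fun h =>
    hne (injOn_cos (hIcc θi hθi) (hIcc θr hθr) ((sqrt_inj hci.le hcr.le).mp h))
  have hD : cos θi + cos θr - 2 * √(cos θi * cos θr) * cos (φ y)
      = √(cos θi) ^ 2 + √(cos θr) ^ 2 - 2 * (√(cos θi) * √(cos θr)) * cos (φ y) := by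
    rw [sq_sqrt hci.le, sq_sqrt hcr.le, sqrt_mul hci.le]
  rw [hD, hZ3, hΨ, mul_div_assoc, Complex.re_ofReal_mul,
    Complex.re_div_ofReal_sub_ofReal_mul_exp, Complex.sq_norm,
    Complex.normSq_ofReal_sub_ofReal_mul_exp]
  refine ⟨rfl, sq_add_sq_sub_two_mul_mul_cos_pos (by positivity) hsqrt_ne _, ?_⟩
  rw [sq_sqrt hci.le, sq_sqrt hcr.le, div_mul_div_comm, ← mul_assoc]

/-- Explicit formulas for the squared modulus of the denominator
of the globally-optimal impedance Z3 and for its real part. -/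
theorem stmt_17 (θi θr k η0 : ℝ)
    (hθi : θi ∈ Set.Ico 0 (π / 2)) (hθr : θr ∈ Set.Ico 0 (π / 2))
    (hne : θi ≠ θr) (hk : 0 < k) (hη0 : 0 < η0)
    (φ : ℝ → ℝ) (hφ : ∀ y : ℝ, φ y = k * (Real.sin θr - Real.sin θi) * y)
    (Ψ : ℝ → ℂ) (hΨ : ∀ y : ℝ, Ψ y = Complex.exp (-Complex.I * ((φ y : ℝ) : ℂ)))
    (Z3 : ℝ → ℂ)
    (hZ3 : ∀ y : ℝ, Z3 y =
      ((η0 / Real.sqrt (Real.cos θi * Real.cos θr) : ℝ) : ℂ) *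
        (((Real.sqrt (Real.cos θr) : ℝ) : ℂ) + ((Real.sqrt (Real.cos θi) : ℝ) : ℂ) * Ψ y) /
        (((Real.sqrt (Real.cos θi) : ℝ) : ℂ) - ((Real.sqrt (Real.cos θr) : ℝ) : ℂ) * Ψ y)) :
    ∀ y : ℝ,
      ((‖(((Real.sqrt (Real.cos θi) : ℝ) : ℂ)
            - ((Real.sqrt (Real.cos θr) : ℝ) : ℂ) * Ψ y)‖) ^ 2
          = Real.cos θi + Real.cos θr
            - 2 * Real.sqrt (Real.cos θi * Real.cos θr) * Real.cos (φ y)) ∧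
      (0 < Real.cos θi + Real.cos θr
            - 2 * Real.sqrt (Real.cos θi * Real.cos θr) * Real.cos (φ y)) ∧
      ((Z3 y).re = η0 * (Real.cos θi - Real.cos θr) * Real.cos (φ y) /
        (Real.sqrt (Real.cos θi * Real.cos θr) *
          (Real.cos θi + Real.cos θr
            - 2 * Real.sqrt (Real.cos θi * Real.cos θr) * Real.cos (φ y)))) :=
  stmt_17_general θi θr η0 hθi hθr hne φ Ψ hΨ Z3 hZ3
end

section
/- Let θ_i, θ_r ∈ [0, π/2) with θ_i ≠ θ_r, k > 0, η0 > 0, let Ψ(y) = exp(−i k(sin θ_r − sin θ_i) y) and Z3(y) = (η0/√(cos θ_i cos θ_r))·(√(cos θ_r) + √(cos θ_i) Ψ(y))/(√(cos θ_i) − √(cos θ_r) Ψ(y)), and let D = (2π/k)/|sin θ_r − sin θ_i| be the RIS period. Then the globally-optimal impedance requires both local loss and local power amplification along the surface: there exist y₁, y₂ ∈ [0, D) with Re(Z3(y₁)) > 0 and Re(Z3(y₂)) < 0. -/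
/-!
Along one period the phase Ψ runs once around the unit circle; at y = 0 it equals 1 and at
y = D/2 it equals -1. There Z3 takes the real values c (√cos θr ± √cos θi) / (√cos θi ∓ √cos θr)
with c = η0 / √(cos θi cos θr), whose product is -c² < 0, so one is positive and the other
negative.
-/

open Real

noncomputable def mobiusImpedance (c a b : ℝ) (w : ℂ) : ℂ :=
  c * (b + a * w) / (a - b * w)

lemma mobiusImpedance_one_re_mul_neg_one_re {c a b : ℝ} (hab : a ≠ b) (hab' : a + b ≠ 0) :
    (mobiusImpedance c a b 1).re * (mobiusImpedance c a b (-1)).re = -c ^ 2 := by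
  have hone : mobiusImpedance c a b 1 = ((c * (b + a) / (a - b) : ℝ) : ℂ) := by
    simp only [mobiusImpedance]; push_cast; ring
  have hneg_one : mobiusImpedance c a b (-1) = ((c * (b - a) / (a + b) : ℝ) : ℂ) := by
    simp only [mobiusImpedance]; push_cast; ring
  have hsub : a - b ≠ 0 := sub_ne_zero.2 hab
  rw [hone, hneg_one, Complex.ofReal_re, Complex.ofReal_re]
  field_simp
  ring

lemma Complex.exp_neg_I_mul_of_abs_eq_pi {t : ℝ} (ht : |t| = π) :
    Complex.exp (-Complex.I * t) = -1 := by
  rcases (abs_eq pi_pos.le).1 ht with rfl | rfl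
  · rw [show -Complex.I * (π : ℝ) = -(π * Complex.I) by ring, Complex.exp_neg,
      Complex.exp_pi_mul_I]
    norm_num
  · rw [show -Complex.I * ((-π : ℝ) : ℂ) = π * Complex.I by push_cast; ring,
      Complex.exp_pi_mul_I]

lemma abs_mul_half_period {k s : ℝ} (hk : 0 < k) (hs : s ≠ 0) :
    |k * s * ((2 * π / k) / |s| / 2)| = π := by
  have hs' : 0 < |s| := abs_pos.2 hs
  rw [abs_mul, abs_mul, abs_of_pos hk, abs_of_pos (by positivity : 0 < (2 * π / k) / |s| / 2)]
  field_simp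

lemma sin_ne_sin_of_mem_Ico {θ θ' : ℝ} (hθ : θ ∈ Set.Ico 0 (π / 2))
    (hθ' : θ' ∈ Set.Ico 0 (π / 2)) (hne : θ ≠ θ') : sin θ ≠ sin θ' := fun h =>
  hne <| injOn_sin ⟨by linarith [hθ.1, pi_pos], hθ.2.le⟩ ⟨by linarith [hθ'.1, pi_pos], hθ'.2.le⟩ h

lemma cos_pos_of_mem_Ico {θ : ℝ} (hθ : θ ∈ Set.Ico 0 (π / 2)) : 0 < cos θ :=
  cos_pos_of_mem_Ioo ⟨by linarith [hθ.1, pi_pos], hθ.2⟩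

lemma sqrt_cos_ne_sqrt_cos_of_mem_Ico {θ θ' : ℝ} (hθ : θ ∈ Set.Ico 0 (π / 2))
    (hθ' : θ' ∈ Set.Ico 0 (π / 2)) (hne : θ ≠ θ') : √(cos θ) ≠ √(cos θ') := fun h =>
  hne <| injOn_cos ⟨hθ.1, by linarith [hθ.2, pi_pos]⟩ ⟨hθ'.1, by linarith [hθ'.2, pi_pos]⟩ <|
    (sqrt_inj (cos_pos_of_mem_Ico hθ).le (cos_pos_of_mem_Ico hθ').le).1 h

/-- The globally-optimal impedance Z3 requires both local loss
and local power amplification within one period of the RIS. -/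
theorem stmt_18 (θi θr k η0 : ℝ)
    (hθi : θi ∈ Set.Ico 0 (π / 2)) (hθr : θr ∈ Set.Ico 0 (π / 2))
    (hne : θi ≠ θr) (hk : 0 < k) (hη0 : 0 < η0)
    (Ψ : ℝ → ℂ)
    (hΨ : ∀ y : ℝ, Ψ y = Complex.exp (-Complex.I * ((k * (Real.sin θr - Real.sin θi) * y : ℝ) : ℂ)))
    (Z3 : ℝ → ℂ)
    (hZ3 : ∀ y : ℝ, Z3 y =
      ((η0 / Real.sqrt (Real.cos θi * Real.cos θr) : ℝ) : ℂ) *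
        (((Real.sqrt (Real.cos θr) : ℝ) : ℂ) + ((Real.sqrt (Real.cos θi) : ℝ) : ℂ) * Ψ y) /
        (((Real.sqrt (Real.cos θi) : ℝ) : ℂ) - ((Real.sqrt (Real.cos θr) : ℝ) : ℂ) * Ψ y))
    (D : ℝ) (hD : D = (2 * π / k) / |Real.sin θr - Real.sin θi|) :
    ∃ y₁ ∈ Set.Ico 0 D, ∃ y₂ ∈ Set.Ico 0 D,
      0 < (Z3 y₁).re ∧ (Z3 y₂).re < 0 := by
  have hs : sin θr - sin θi ≠ 0 := sub_ne_zero.2 (sin_ne_sin_of_mem_Ico hθr hθi hne.symm)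
  have hD_pos : 0 < D := by rw [hD]; have := abs_pos.2 hs; positivity
  have hΨ_zero : Ψ 0 = 1 := by simp [hΨ]
  have hΨ_half : Ψ (D / 2) = -1 := by
    rw [hΨ, hD]; exact Complex.exp_neg_I_mul_of_abs_eq_pi (abs_mul_half_period hk hs)
  have hprod : (Z3 0).re * (Z3 (D / 2)).re < 0 := by
    have hZ3' : ∀ y, Z3 y = mobiusImpedance _ _ _ (Ψ y) := hZ3
    have hci := cos_pos_of_mem_Ico hθi
    have hcr := cos_pos_of_mem_Ico hθr
    have hc : η0 / √(cos θi * cos θr) ≠ 0 :=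
      div_ne_zero hη0.ne' (sqrt_ne_zero'.2 (mul_pos hci hcr))
    rw [hZ3', hZ3', hΨ_zero, hΨ_half, mobiusImpedance_one_re_mul_neg_one_re
      (sqrt_cos_ne_sqrt_cos_of_mem_Ico hθi hθr hne)
      (by linarith [sqrt_pos.2 hci, sqrt_pos.2 hcr])]
    exact neg_neg_of_pos (sq_pos_of_ne_zero hc)
  have h_zero_mem : (0 : ℝ) ∈ Set.Ico 0 D := ⟨le_rfl, hD_pos⟩
  have h_half_mem : D / 2 ∈ Set.Ico 0 D := ⟨by linarith, by linarith⟩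
  rcases mul_neg_iff.1 hprod with ⟨hpos, hneg⟩ | ⟨hneg, hpos⟩
  · exact ⟨0, h_zero_mem, D / 2, h_half_mem, hpos, hneg⟩
  · exact ⟨D / 2, h_half_mem, 0, h_zero_mem, hpos, hneg⟩
end
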